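/- arXiv:2605.29318 — 4 statements merged into one kernel-verified Lean document; each statement's English description precedes it below -/
import Mathlib

section
/- Let λ, μ ∈ ℝ with λ + μ ≠ 0 and γ = 1 + μ/(λ + μ). The Fréchet derivative of the Neo-Hookean energy density Ψ at the identity matrix I is the zero linear map; that is, the rest configuration F = I is a critical point of Ψ (the rest state is stress-free). -/
/-!
Along the line `t ↦ I + t • H` the determinant has derivative `tr H` at `t = 0` and
`tr (Fᵀ F)` has derivative `2 tr H`, so `DΨ(I) H = ((λ + μ)(1 - γ) + μ) tr H`.
The constant `γ` is chosen precisely so that `(λ + μ)(γ - 1) = μ`, which kills this coefficient.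
-/

open Matrix

attribute [local instance] Matrix.normedAddCommGroup Matrix.normedSpace

/-- Neo-Hookean strain energy density with Lamé parameters `lam`, `mu`,
`γ = 1 + mu / (lam + mu)` and constant offset `E0`. -/
noncomputable def neoHookean (lam mu E0 : ℝ) (F : Matrix (Fin 3) (Fin 3) ℝ) : ℝ :=
  (1 / 2) * ((lam + mu) * (F.det - (1 + mu / (lam + mu))) ^ 2 + mu * (Fᵀ * F).trace - E0)

namespace Matrix

variable {𝕜 : Type*} [NontriviallyNormedField 𝕜] {m n : Type*} [Fintype m] [Fintype n]

@[fun_prop]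
theorem differentiable_det [DecidableEq n] : Differentiable 𝕜 (det : Matrix n n 𝕜 → 𝕜) := by
  simp_rw [_root_.funext det_apply]
  fun_prop

@[fun_prop]
theorem differentiable_trace_transpose_mul_self :
    Differentiable 𝕜 (fun F : Matrix m n 𝕜 => (Fᵀ * F).trace) := by
  simp only [trace, diag, mul_apply, transpose_apply]
  fun_prop

theorem hasDerivAt_det_one_add_smul [DecidableEq n] (H : Matrix n n 𝕜) :
    HasDerivAt (fun t : 𝕜 => det (1 + t • H)) (trace H) 0 := by
  have h := (det (1 + (Polynomial.X : Polynomial 𝕜) • H.map Polynomial.C)).hasDerivAt 0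
  rw [derivative_det_one_add_X_smul] at h
  convert h using 2 with t
  rw [← Polynomial.coe_evalRingHom, RingHom.map_det]
  congr 1
  ext i j
  simp [one_apply, apply_ite, mul_comm t]

theorem hasDerivAt_trace_transpose_mul_self_add_smul (F H : Matrix m n 𝕜) :
    HasDerivAt (fun t : 𝕜 => ((F + t • H)ᵀ * (F + t • H)).trace) (2 * (Fᵀ * H).trace) 0 := by
  have hexpand : (fun t : 𝕜 => ((F + t • H)ᵀ * (F + t • H)).trace) =
      fun t => (Fᵀ * F).trace + t * (2 * (Fᵀ * H).trace) + t ^ 2 * (Hᵀ * H).trace := by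
    ext t
    simp only [transpose_add, transpose_smul, Matrix.add_mul, Matrix.mul_add, Matrix.smul_mul,
      Matrix.mul_smul, trace_add, trace_smul, smul_eq_mul]
    rw [← trace_transpose (Hᵀ * F), transpose_mul, transpose_transpose]
    ring
  rw [hexpand]
  refine ((((hasDerivAt_id' 0).mul_const _).const_add _).add
    ((hasDerivAt_pow 2 0).mul_const _)).congr_deriv ?_
  simp

end Matrix

theorem differentiable_neoHookean (lam mu E0 : ℝ) : Differentiable ℝ (neoHookean lam mu E0) := by
  unfold neoHookean
  fun_prop

theorem hasLineDerivAt_neoHookean_one (lam mu E0 : ℝ) (H : Matrix (Fin 3) (Fin 3) ℝ) :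
    HasLineDerivAt ℝ (neoHookean lam mu E0)
      (((lam + mu) * (1 - (1 + mu / (lam + mu))) + mu) * H.trace) 1 H := by
  have hdet := (hasDerivAt_det_one_add_smul H).sub_const (1 + mu / (lam + mu))
  have htr := hasDerivAt_trace_transpose_mul_self_add_smul (1 : Matrix (Fin 3) (Fin 3) ℝ) H
  unfold HasLineDerivAt neoHookean
  refine ((((hdet.pow 2).const_mul (lam + mu)).add (htr.const_mul mu)).sub_const E0
    |>.const_mul (1 / 2)).congr_deriv ?_
  simp only [zero_smul, add_zero, det_one, transpose_one, one_mul]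
  ring

/-- The rest configuration `F = I` is a critical point of the Neo-Hookean energy:
the Fréchet derivative at the identity is the zero linear map. -/
theorem neoHookean_fderiv_one (lam mu E0 : ℝ) (hlm : lam + mu ≠ 0) :
    fderiv ℝ (neoHookean lam mu E0) (1 : Matrix (Fin 3) (Fin 3) ℝ) = 0 := by
  have hcoeff : (lam + mu) * (1 - (1 + mu / (lam + mu))) + mu = 0 := by
    field_simp
    ring
  refine ContinuousLinearMap.ext fun H => ?_
  refine (((differentiable_neoHookean lam mu E0 1).hasFDerivAt.hasLineDerivAt H).unique
    (hasLineDerivAt_neoHookean_one lam mu E0 H)).trans ?_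
  rw [hcoeff, zero_mul]
  rfl
end

section
/- Let λ, μ ∈ ℝ with λ + μ ≠ 0 and γ = 1 + μ/(λ + μ). For every invertible matrix F ∈ Matrix (Fin 3) (Fin 3) ℝ, the Neo-Hookean energy density Ψ is twice Fréchet differentiable at F, and its second derivative, as a bilinear form applied to directions H, K ∈ Matrix (Fin 3) (Fin 3) ℝ, equals μ·tr(Hᵀ K) + (λ + μ)·(2·det F − γ)·(det F)·tr(F⁻¹ H)·tr(F⁻¹ K) − (λ + μ)·(det F − γ)·(det F)·tr(F⁻¹ H F⁻¹ K). -/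
open Matrix

attribute [local instance] Matrix.normedAddCommGroup Matrix.normedSpace

/-!
The determinant is multilinear in the rows, so `D det(X) H = tr (adj X * H)`; in particular the
adjugate, whose entries are determinants of row-updated matrices, is differentiable.
Differentiating `adj X * X = det X • 1` at an invertible `F` gives
`D adj(F) H = (tr (adj F * H) • 1 - adj F * H) * F⁻¹`, and with `adj F = det F • F⁻¹` this is
`tr (D adj(F) H * K) = det F * (tr (F⁻¹ H) tr (F⁻¹ K) - tr (F⁻¹ H F⁻¹ K))`.
The second derivative of the energy then follows from the product rule.
-/

section

-- Matrices take their topology from the norm, so that instance search sees the spaces of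
-- continuous linear maps between them as normed spaces. The main theorem is stated with the
-- product topology; the two agree definitionally, which `exact` sees but `rw` and `simp` do not.
attribute [-instance] instTopologicalSpaceMatrix Matrix.instUniformSpace

namespace Matrix

variable {m n : Type*} [Fintype m] [Fintype n]

noncomputable def transposeCLM : Matrix m n ℝ →L[ℝ] Matrix n m ℝ :=
  LinearMap.toContinuousLinearMap (transposeLinearEquiv m n ℝ ℝ).toLinearMap

@[simp] lemma transposeCLM_apply (A : Matrix m n ℝ) : transposeCLM A = Aᵀ := rfl

variable [DecidableEq n]

noncomputable def mulCLM : Matrix n n ℝ →L[ℝ] Matrix n n ℝ →L[ℝ] Matrix n n ℝ :=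
  LinearMap.toContinuousLinearMap
    (LinearMap.toContinuousLinearMap.toLinearMap ∘ₗ LinearMap.mul ℝ (Matrix n n ℝ))

noncomputable def traceMulCLM : Matrix n n ℝ →L[ℝ] Matrix n n ℝ →L[ℝ] ℝ :=
  LinearMap.toContinuousLinearMap
    (LinearMap.toContinuousLinearMap.toLinearMap ∘ₗ
      (LinearMap.mul ℝ (Matrix n n ℝ)).compr₂ (traceLinearMap n ℝ ℝ))

@[simp] lemma traceMulCLM_apply (A B : Matrix n n ℝ) : traceMulCLM A B = (A * B).trace := rfl

noncomputable def detRowContinuousMultilinear :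
    ContinuousMultilinearMap ℝ (fun _ : n => n → ℝ) ℝ :=
  { (detRowAlternating : (n → ℝ) [⋀^n]→ₗ[ℝ] ℝ).toMultilinearMap with
    cont := continuous_id.matrix_det }

lemma det_updateRow_eq_sum_adjugate {α : Type*} [CommRing α] (X : Matrix n n α)
    (i : n) (v : n → α) :
    (X.updateRow i v).det = ∑ j, v j * X.adjugate j i := by
  rw [← cramer_transpose_apply, cramer_eq_adjugate_mulVec, ← adjugate_transpose]
  simp [mulVec, dotProduct, mul_comm]

theorem hasFDerivAt_det (X : Matrix n n ℝ) :
    HasFDerivAt det (traceMulCLM X.adjugate) X := by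
  refine (detRowContinuousMultilinear.hasFDerivAt X).congr_fderiv
    (ContinuousLinearMap.ext fun H => ?_)
  refine (ContinuousMultilinearMap.linearDeriv_apply _ _ _).trans ?_
  change ∑ i, (X.updateRow i (H i)).det = ∑ j, ∑ i, X.adjugate j i * H i j
  rw [Finset.sum_comm]
  refine Finset.sum_congr rfl fun i _ => ?_
  simp only [mul_comm (X.adjugate _ i)]
  exact det_updateRow_eq_sum_adjugate X i (H i)

theorem differentiable_updateRow (i : n) (v : n → ℝ) :
    Differentiable ℝ fun X : Matrix n n ℝ => X.updateRow i v := by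
  refine differentiable_pi.2 fun k => ?_
  by_cases hk : k = i
  · subst hk
    simp only [updateRow_self]
    exact differentiable_const _
  · simp only [updateRow_ne hk]
    exact differentiable_apply k

theorem differentiable_adjugate :
    Differentiable ℝ (adjugate : Matrix n n ℝ → Matrix n n ℝ) := by
  refine differentiable_pi.2 fun i => differentiable_pi.2 fun j => ?_
  simp only [adjugate_apply]
  exact fun X => (hasFDerivAt_det _).differentiableAt.comp X (differentiable_updateRow j _ X)

lemma adjugate_eq_det_smul_inv {α : Type*} [CommRing α] {F : Matrix n n α}
    (hF : IsUnit F.det) : F.adjugate = F.det • F⁻¹ := by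
  rw [← smul_one_mul, ← adjugate_mul, Matrix.mul_assoc, mul_nonsing_inv F hF, Matrix.mul_one]

theorem fderiv_adjugate_apply {F : Matrix n n ℝ} (hF : IsUnit F.det) (K : Matrix n n ℝ) :
    fderiv ℝ adjugate F K = ((F.adjugate * K).trace • 1 - F.adjugate * K) * F⁻¹ := by
  have hprod := mulCLM.hasFDerivAt_of_bilinear
    (differentiable_adjugate F).hasFDerivAt (hasFDerivAt_id F)
  have hdet := (hasFDerivAt_det F).smul_const (1 : Matrix n n ℝ)
  rw [show (fun X : Matrix n n ℝ => X.det • (1 : Matrix n n ℝ)) = fun X => X.adjugate * X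
    from funext fun X => (adjugate_mul X).symm] at hdet
  have hK : F.adjugate * K + fderiv ℝ adjugate F K * F = (F.adjugate * K).trace • 1 :=
    congrArg (· K) (hprod.unique hdet)
  rw [← eq_sub_iff_add_eq'] at hK
  rw [← hK, Matrix.mul_nonsing_inv_cancel_right F _ hF]

theorem trace_fderiv_adjugate_mul {F : Matrix n n ℝ} (hF : IsUnit F.det) (H K : Matrix n n ℝ) :
    (fderiv ℝ adjugate F H * K).trace =
      F.det * ((F⁻¹ * H).trace * (F⁻¹ * K).trace - (F⁻¹ * H * F⁻¹ * K).trace) := by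
  rw [fderiv_adjugate_apply hF, adjugate_eq_det_smul_inv hF]
  simp only [Matrix.sub_mul, Matrix.smul_mul, Matrix.one_mul, trace_sub, trace_smul, smul_eq_mul,
    Matrix.mul_assoc]
  ring

end Matrix

noncomputable def neoHookeanFDeriv (lam mu : ℝ) (X : Matrix (Fin 3) (Fin 3) ℝ) :
    Matrix (Fin 3) (Fin 3) ℝ →L[ℝ] ℝ :=
  ((lam + mu) * (X.det - (1 + mu / (lam + mu)))) • traceMulCLM X.adjugate +
    mu • traceMulCLM Xᵀ

theorem hasFDerivAt_neoHookean (lam mu E0 : ℝ) (X : Matrix (Fin 3) (Fin 3) ℝ) :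
    HasFDerivAt (neoHookean lam mu E0) (neoHookeanFDeriv lam mu X) X := by
  have hq := traceMulCLM.hasFDerivAt_of_bilinear (transposeCLM.hasFDerivAt (x := X))
    (hasFDerivAt_id X)
  have h := ((((hasFDerivAt_det X).sub_const (1 + mu / (lam + mu))).pow 2).const_mul (lam + mu)
    |>.add (hq.const_mul mu) |>.sub_const E0).const_mul (1 / 2 : ℝ)
  refine h.congr_fderiv (ContinuousLinearMap.ext fun H => ?_)
  have hsymm : (Hᵀ * X).trace = (Xᵀ * H).trace := by
    rw [← trace_transpose, transpose_mul, transpose_transpose]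
  simp only [one_div, Nat.add_one_sub_one, pow_one, nsmul_eq_mul, Nat.cast_ofNat,
    transposeCLM_apply, ContinuousLinearMap.precompR_apply, ContinuousLinearMap.compL_apply,
    ContinuousLinearMap.comp_id, id_eq, smul_add, _root_.add_apply, _root_.smul_apply,
    traceMulCLM_apply, smul_eq_mul, ContinuousLinearMap.precompL_apply, hsymm, neoHookeanFDeriv]
  ring

theorem exists_hasFDerivAt_neoHookeanFDeriv (lam mu : ℝ) {F : Matrix (Fin 3) (Fin 3) ℝ}
    (hF : IsUnit F.det) :
    ∃ f'' : Matrix (Fin 3) (Fin 3) ℝ →L[ℝ] Matrix (Fin 3) (Fin 3) ℝ →L[ℝ] ℝ,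
      HasFDerivAt (neoHookeanFDeriv lam mu) f'' F ∧
        ∀ H K : Matrix (Fin 3) (Fin 3) ℝ,
          f'' H K =
            mu * (Hᵀ * K).trace +
              (lam + mu) * (2 * F.det - (1 + mu / (lam + mu))) * F.det *
                (F⁻¹ * H).trace * (F⁻¹ * K).trace -
              (lam + mu) * (F.det - (1 + mu / (lam + mu))) * F.det *
                (F⁻¹ * H * F⁻¹ * K).trace := by
  set γ := 1 + mu / (lam + mu)
  have hcoeff := ((hasFDerivAt_det F).sub_const γ).const_mul (lam + mu)
  have hadj : HasFDerivAt (fun X => traceMulCLM X.adjugate)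
      (traceMulCLM.comp (fderiv ℝ adjugate F)) F :=
    traceMulCLM.hasFDerivAt.comp F (differentiable_adjugate F).hasFDerivAt
  have htr := (traceMulCLM.comp transposeCLM).hasFDerivAt (x := F)
  refine ⟨_, (hcoeff.smul hadj).add (htr.const_smul mu), fun H K => ?_⟩
  simp only [_root_.add_apply, _root_.smul_apply, ContinuousLinearMap.comp_apply,
    ContinuousLinearMap.smulRight_apply, traceMulCLM_apply, transposeCLM_apply, smul_eq_mul]
  rw [trace_fderiv_adjugate_mul hF, adjugate_eq_det_smul_inv hF]
  simp only [Matrix.smul_mul, trace_smul, smul_eq_mul]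
  ring

end

theorem neoHookean_second_fderiv_general (lam mu E0 : ℝ)
    (F : Matrix (Fin 3) (Fin 3) ℝ) (hF : IsUnit F.det) :
    DifferentiableAt ℝ (neoHookean lam mu E0) F ∧
      ∃ f'' : Matrix (Fin 3) (Fin 3) ℝ →L[ℝ] Matrix (Fin 3) (Fin 3) ℝ →L[ℝ] ℝ,
        HasFDerivAt (fderiv ℝ (neoHookean lam mu E0)) f'' F ∧
          ∀ H K : Matrix (Fin 3) (Fin 3) ℝ,
            f'' H K =
              mu * (Hᵀ * K).trace +
                (lam + mu) * (2 * F.det - (1 + mu / (lam + mu))) * F.det *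
                  (F⁻¹ * H).trace * (F⁻¹ * K).trace -
                (lam + mu) * (F.det - (1 + mu / (lam + mu))) * F.det *
                  (F⁻¹ * H * F⁻¹ * K).trace := by
  have hfd : fderiv ℝ (neoHookean lam mu E0) = neoHookeanFDeriv lam mu :=
    funext fun X => (hasFDerivAt_neoHookean lam mu E0 X).fderiv
  obtain ⟨f'', hf'', hval⟩ := exists_hasFDerivAt_neoHookeanFDeriv lam mu hF
  exact ⟨(hasFDerivAt_neoHookean lam mu E0 F).differentiableAt, f'', hfd ▸ hf'', hval⟩

/-- Second Fréchet derivative of the Neo-Hookean energy at an invertible `F`. -/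
theorem neoHookean_second_fderiv (lam mu E0 : ℝ) (hlm : lam + mu ≠ 0)
    (F : Matrix (Fin 3) (Fin 3) ℝ) (hF : IsUnit F.det) :
    DifferentiableAt ℝ (neoHookean lam mu E0) F ∧
      ∃ f'' : Matrix (Fin 3) (Fin 3) ℝ →L[ℝ] Matrix (Fin 3) (Fin 3) ℝ →L[ℝ] ℝ,
        HasFDerivAt (fderiv ℝ (neoHookean lam mu E0)) f'' F ∧
          ∀ H K : Matrix (Fin 3) (Fin 3) ℝ,
            f'' H K =
              mu * (Hᵀ * K).trace +
                (lam + mu) * (2 * F.det - (1 + mu / (lam + mu))) * F.det *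
                  (F⁻¹ * H).trace * (F⁻¹ * K).trace -
                (lam + mu) * (F.det - (1 + mu / (lam + mu))) * F.det *
                  (F⁻¹ * H * F⁻¹ * K).trace :=
  neoHookean_second_fderiv_general lam mu E0 F hF
end

section
/- Let λ, μ ∈ ℝ with λ + μ ≠ 0 and γ = 1 + μ/(λ + μ). Fix vectors g₁, …, g_K ∈ ℝ³ and an index s ∈ Fin 3, and define f : ℝ^K → ℝ by f(d) = Ψ(I + e_s (Σ_{k=1}^{K} d_k g_k)ᵀ), i.e. the deformation gradient perturbs only the s-th row. Then f is twice differentiable at 0, and its second derivative at 0 applied to directions u, v ∈ ℝ^K equals (λ + 2μ)·(Σ_k u_k g_k)_s·(Σ_k v_k g_k)_s + μ·Σ_{t ≠ s} (Σ_k u_k g_k)_t·(Σ_k v_k g_k)_t; equivalently, the Hessian matrix of f at 0 is (λ + 2μ)·r_s r_sᵀ + μ·Σ_{t ≠ s} r_t r_tᵀ ∈ ℝ^{K×K}, where r_t ∈ ℝ^K is the vector with entries (r_t)_k = (g_k)_t. -/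
open Matrix

/-!
Along the perturbed row, `det (1 + e_s wᵀ) = 1 + w_s` and `tr (Fᵀ F) = 3 + 2 w_s + |w|²`. The
choice of `γ` makes the terms linear in `w` cancel, so `f` is a constant plus half of a symmetric
bilinear form evaluated on the diagonal. The derivative of such a function at `x` is the form
itself applied to `x`; being linear in `x`, the form is then its own derivative.
-/

namespace Matrix

variable {n R : Type*} [Fintype n] [DecidableEq n] [CommRing R]

theorem det_one_add_vecMulVec (u w : n → R) : (1 + vecMulVec u w).det = 1 + w ⬝ᵥ u := by
  rw [vecMulVec_eq Unit, det_one_add_replicateCol_mul_replicateRow]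

theorem trace_transpose_one_add_vecMulVec_mul_self (u w : n → R) :
    ((1 + vecMulVec u w)ᵀ * (1 + vecMulVec u w)).trace =
      Fintype.card n + 2 * (u ⬝ᵥ w) + (u ⬝ᵥ u) * (w ⬝ᵥ w) := by
  simp only [transpose_add, transpose_one, transpose_vecMulVec, add_mul, mul_add, one_mul,
    mul_one, vecMulVec_mul_vecMulVec, trace_add, trace_one, trace_vecMulVec, dotProduct_smul,
    smul_eq_mul, dotProduct_comm w u]
  ring

end Matrix

section RowHessian

variable {ι : Type*} [Fintype ι] [DecidableEq ι]

open ContinuousLinearMap in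
noncomputable def rowHessian (lam mu : ℝ) (s : ι) : (ι → ℝ) →L[ℝ] (ι → ℝ) →L[ℝ] ℝ :=
  (lam + 2 * mu) • (proj s).smulRight (proj s) +
    mu • ∑ t ∈ Finset.univ.erase s, (proj t).smulRight (proj t)

theorem rowHessian_apply (lam mu : ℝ) (s : ι) (w w' : ι → ℝ) :
    rowHessian lam mu s w w' =
      (lam + 2 * mu) * w s * w' s + mu * ∑ t ∈ Finset.univ.erase s, w t * w' t := by
  simp [rowHessian, mul_assoc]

theorem rowHessian_comm (lam mu : ℝ) (s : ι) (w w' : ι → ℝ) :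
    rowHessian lam mu s w w' = rowHessian lam mu s w' w := by
  simp only [rowHessian_apply, mul_comm (w _), mul_right_comm _ (w' s)]

end RowHessian

theorem neoHookean_one_add_vecMulVec_single {lam mu : ℝ} (hlm : lam + mu ≠ 0) (E0 : ℝ)
    (s : Fin 3) (w : Fin 3 → ℝ) :
    neoHookean lam mu E0 (1 + vecMulVec (Pi.single s 1) w) =
      neoHookean lam mu E0 1 + 1 / 2 * rowHessian lam mu s w w := by
  have hdot : w ⬝ᵥ w = w s ^ 2 + ∑ t ∈ Finset.univ.erase s, w t * w t := by
    rw [dotProduct, ← Finset.add_sum_erase _ _ (Finset.mem_univ s), sq]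
  simp only [neoHookean, det_one_add_vecMulVec, trace_transpose_one_add_vecMulVec_mul_self,
    rowHessian_apply, det_one, transpose_one, mul_one, trace_one, Fintype.card_fin,
    dotProduct_single, single_dotProduct, Pi.single_eq_same, hdot]
  field_simp
  ring

section Quadratic

variable {𝕜 E F : Type*} [NontriviallyNormedField 𝕜] [CharZero 𝕜]
  [NormedAddCommGroup E] [NormedSpace 𝕜 E] [NormedAddCommGroup F] [NormedSpace 𝕜 F]

theorem hasFDerivAt_const_add_half_smul_apply_self (B : E →L[𝕜] E →L[𝕜] F)
    (hB : ∀ x y, B x y = B y x) (c : F) (x : E) :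
    HasFDerivAt (fun y => c + (2 : 𝕜)⁻¹ • B y y) (B x) x := by
  have hquad : HasFDerivAt (fun y => B y y) (B x + B x) x := by
    refine (B.hasFDerivAt.clm_apply (hasFDerivAt_id x)).congr_fderiv ?_
    ext y
    simp [hB y x]
  refine ((hquad.const_smul (2 : 𝕜)⁻¹).const_add c).congr_fderiv ?_
  rw [← two_smul 𝕜 (B x), smul_smul, inv_mul_cancel₀ two_ne_zero, one_smul]

theorem fderiv_const_add_half_smul_apply_self (B : E →L[𝕜] E →L[𝕜] F)
    (hB : ∀ x y, B x y = B y x) (c : F) :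
    fderiv 𝕜 (fun y => c + (2 : 𝕜)⁻¹ • B y y) = B :=
  funext fun x => (hasFDerivAt_const_add_half_smul_apply_self B hB c x).fderiv

end Quadratic

/-- Perturbing only the `s`-th row of the deformation gradient, the Hessian at `0` of
`f(d) = Ψ(I + e_s (Σ_k d_k g_k)ᵀ)` applied to `u, v` is
`(λ + 2μ)(Σ_k u_k g_k)_s (Σ_k v_k g_k)_s + μ Σ_{t ≠ s} (Σ_k u_k g_k)_t (Σ_k v_k g_k)_t`;
equivalently, the Hessian matrix is `(λ + 2μ) r_s r_sᵀ + μ Σ_{t ≠ s} r_t r_tᵀ`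
with `(r_t)_k = (g_k)_t`. -/
theorem neoHookean_row_hessian (lam mu E0 : ℝ) (hlm : lam + mu ≠ 0)
    (K : ℕ) (g : Fin K → Fin 3 → ℝ) (s : Fin 3)
    (f : (Fin K → ℝ) → ℝ)
    (hf : f = fun d =>
      neoHookean lam mu E0
        (1 + Matrix.vecMulVec (Pi.single s 1) (∑ k, d k • g k))) :
    DifferentiableAt ℝ f 0 ∧
      ∃ f'' : (Fin K → ℝ) →L[ℝ] (Fin K → ℝ) →L[ℝ] ℝ,
        HasFDerivAt (fderiv ℝ f) f'' 0 ∧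
          (∀ u v : Fin K → ℝ,
            f'' u v =
              (lam + 2 * mu) * (∑ k, u k • g k) s * (∑ k, v k • g k) s +
                mu * ∑ t ∈ Finset.univ.erase s,
                  (∑ k, u k • g k) t * (∑ k, v k • g k) t) ∧
          (Matrix.of fun k l : Fin K => f'' (Pi.single k 1) (Pi.single l 1)) =
            (lam + 2 * mu) • Matrix.vecMulVec (fun k => g k s) (fun k => g k s) +
              mu • ∑ t ∈ Finset.univ.erase s,
                Matrix.vecMulVec (fun k => g k t) (fun k => g k t) := by
  set G : (Fin K → ℝ) →L[ℝ] (Fin 3 → ℝ) :=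
    LinearMap.toContinuousLinearMap (Fintype.linearCombination ℝ g)
  set T := (rowHessian lam mu s).bilinearComp G G
  have hT : ∀ u v, T u v = T v u := fun u v => rowHessian_comm lam mu s (G u) (G v)
  have hfT : f = fun d => neoHookean lam mu E0 1 + (2 : ℝ)⁻¹ • T d d := by
    ext d
    rw [hf, smul_eq_mul, ← one_div]
    exact neoHookean_one_add_vecMulVec_single hlm E0 s _
  rw [hfT, fderiv_const_add_half_smul_apply_self T hT]
  refine ⟨(hasFDerivAt_const_add_half_smul_apply_self T hT _ 0).differentiableAt, T,
    T.hasFDerivAt, fun u v => rowHessian_apply lam mu s (G u) (G v), ?_⟩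
  ext k l
  simp only [T, G, ContinuousLinearMap.bilinearComp_apply, LinearMap.coe_toContinuousLinearMap',
    Fintype.linearCombination_apply_single, one_smul, rowHessian_apply, of_apply,
    Matrix.add_apply, Matrix.smul_apply, Matrix.sum_apply, vecMulVec_apply, smul_eq_mul]
  ring
end

section
/- (RKPM reproduces affine functions.) With node centers p₁, …, p_K ∈ ℝ³, a point X ∈ ℝ³, strictly positive raw kernel weights w₁, …, w_K > 0, and M(X) invertible, for every affine function u : ℝ³ → ℝ (i.e. u(Y) = c₀ + ⟨c, Y⟩ for some c₀ ∈ ℝ, c ∈ ℝ³) one has Σ_{k=1}^{K} φ_k(X) · u(p_k) = u(X); in particular Σ_k φ_k(X) = 1 (partition of unity) and Σ_k φ_k(X) · p_k = X (linear precision). -/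
open Matrix

/-- The monomial vector `P(Y) = (1, Y₁, Y₂, Y₃)`. -/
noncomputable def monoVec (Y : Fin 3 → ℝ) : Fin 4 → ℝ := ![1, Y 0, Y 1, Y 2]

/-- The RKPM moment matrix `M(X) = Σ_k w_k P(p_k) P(p_k)ᵀ`. -/
noncomputable def momentMat {K : ℕ} (w : Fin K → ℝ) (p : Fin K → Fin 3 → ℝ) :
    Matrix (Fin 4) (Fin 4) ℝ :=
  ∑ k, w k • Matrix.vecMulVec (monoVec (p k)) (monoVec (p k))

/-- The reproducing kernel values `φ_k(X) = w_k P(p_k)ᵀ M(X)⁻¹ P(X)`. -/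
noncomputable def rkKernel {K : ℕ} (w : Fin K → ℝ) (p : Fin K → Fin 3 → ℝ)
    (X : Fin 3 → ℝ) (k : Fin K) : ℝ :=
  w k * (monoVec (p k) ⬝ᵥ ((momentMat w p)⁻¹ *ᵥ monoVec X))

lemma rk_key {K : ℕ} (w : Fin K → ℝ) (p : Fin K → Fin 3 → ℝ) (X : Fin 3 → ℝ)
    (hM : IsUnit (momentMat w p)) (j : Fin 4) :
    ∑ k, rkKernel w p X k * monoVec (p k) j = monoVec X j := by
  have hdet : IsUnit (momentMat w p).det := (Matrix.isUnit_iff_isUnit_det _).mp hM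
  set v : Fin 4 → ℝ := (momentMat w p)⁻¹ *ᵥ monoVec X with hv
  have h1 : momentMat w p *ᵥ v = monoVec X := by
    rw [hv, Matrix.mulVec_mulVec, Matrix.mul_nonsing_inv _ hdet, Matrix.one_mulVec]
  have h2 : (momentMat w p *ᵥ v) j = ∑ k, (w k * (monoVec (p k) ⬝ᵥ v)) * monoVec (p k) j := by
    simp only [momentMat, Matrix.mulVec, dotProduct, Matrix.sum_apply,
      Matrix.smul_apply, Matrix.vecMulVec_apply, smul_eq_mul, Finset.mul_sum, Finset.sum_mul]
    rw [Finset.sum_comm]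
    exact Finset.sum_congr rfl fun k _ => Finset.sum_congr rfl fun i _ => by ring
  simp only [rkKernel, ← hv]
  rw [← h2, h1]

/-- RKPM reproduces affine functions: for every affine `u(Y) = c₀ + ⟨c, Y⟩`,
`Σ_k φ_k(X) u(p_k) = u(X)`; in particular `Σ_k φ_k(X) = 1` (partition of unity)
and `Σ_k φ_k(X) p_k = X` (linear precision). -/
theorem rkpm_reproduces_affine (K : ℕ) (hK : 1 ≤ K) (p : Fin K → Fin 3 → ℝ)
    (X : Fin 3 → ℝ) (w : Fin K → ℝ) (hw : ∀ k, 0 < w k)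
    (hM : IsUnit (momentMat w p)) :
    (∀ (c₀ : ℝ) (c : Fin 3 → ℝ),
        ∑ k, rkKernel w p X k * (c₀ + ∑ i, c i * p k i) = c₀ + ∑ i, c i * X i) ∧
      (∑ k, rkKernel w p X k = 1) ∧
      (∑ k, rkKernel w p X k • p k = X) := by
  have key := rk_key w p X hM
  have haff : ∀ (c₀ : ℝ) (c : Fin 3 → ℝ),
      ∑ k, rkKernel w p X k * (c₀ + ∑ i, c i * p k i) = c₀ + ∑ i, c i * X i := by
    intro c₀ c
    have hP : ∀ Y : Fin 3 → ℝ,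
        c₀ + ∑ i, c i * Y i = ∑ j, (![c₀, c 0, c 1, c 2]) j * monoVec Y j := by
      intro Y
      simp [monoVec, Fin.sum_univ_three, Fin.sum_univ_four]; ring
    simp_rw [hP, Finset.mul_sum]
    rw [Finset.sum_comm]
    refine Finset.sum_congr rfl fun j _ => ?_
    calc ∑ k, rkKernel w p X k * ((![c₀, c 0, c 1, c 2]) j * monoVec (p k) j)
        = (![c₀, c 0, c 1, c 2]) j * ∑ k, rkKernel w p X k * monoVec (p k) j := by
          rw [Finset.mul_sum]; exact Finset.sum_congr rfl fun k _ => by ring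
      _ = _ := by rw [key]
  refine ⟨haff, ?_, ?_⟩
  · simpa using haff 1 0
  · have h3 : ∀ i : Fin 3, ∑ k, rkKernel w p X k * p k i = X i := by
      intro i
      fin_cases i
      · simpa [monoVec] using key 1
      · simpa [monoVec] using key 2
      · simpa [monoVec] using key 3
    funext i
    simp [Finset.sum_apply, Pi.smul_apply, h3 i]
end
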